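/- arXiv:2511.09033 — 3 statements merged into one kernel-verified Lean document; each statement's English description precedes it below -/
import Mathlib

section
/- Set α^t := diag(ϖ^{−t}, ϖ^t) for t ∈ ℤ and K^η := ηKη^{−1} where η := diag(1,ϖ). Then {α^t : t ∈ ℤ_{≥0}} is a complete and irredundant set of double coset representatives for each of the three double coset spaces K\G/K, K\G/K^η, and K^η\G/K^η; that is, in each case G is the disjoint union over t ≥ 0 of the corresponding double cosets of α^t, and these double cosets are pairwise distinct. -/
open Matrix
open scoped Pointwise

noncomputable section

/-- Ambient data for the paper: `E` is the unramified quadratic extension `F(√ε)` of a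
nonarchimedean local field `F` of odd residual characteristic.  The field `F` is realized
as the fixed field of the nontrivial `F`-automorphism `σ` of `E`; `ν` is the discrete
valuation of `E` (extending the valuation of `F` normalized by `ν ϖ = 1` at a uniformizer
`ϖ` of `F`, and still surjecting onto `ℤ` since `E/F` is unramified); `q` is the (odd)
cardinality of the residue field of `F` (so `q²` is that of `E`); `ε ∈ O_F^×` is a
non-square unit and `sqε = √ε` generates `E` over `F`.  The standard facts about the
norm map and squares are included as fields. -/
structure Setting (E : Type*) [Field E] where
  /-- the nontrivial `F`-automorphism of `E`, written `x̄ = σ x` -/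
  σ : E →+* E
  σσ : ∀ x, σ (σ x) = x
  σ_ne_id : σ ≠ RingHom.id E
  /-- the valuation (only its values at nonzero elements matter) -/
  ν : E → ℤ
  ν_mul : ∀ {x y : E}, x ≠ 0 → y ≠ 0 → ν (x * y) = ν x + ν y
  ν_add : ∀ {x y : E}, x ≠ 0 → y ≠ 0 → x + y ≠ 0 → min (ν x) (ν y) ≤ ν (x + y)
  ν_σ : ∀ x, ν (σ x) = ν x
  ν_surj : ∀ n : ℤ, ∃ x : E, x ≠ 0 ∧ ν x = n
  /-- a uniformizer of `F` -/
  ϖ : E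
  ϖ_ne_zero : ϖ ≠ 0
  ϖ_fixed : σ ϖ = ϖ
  ν_ϖ : ν ϖ = 1
  /-- the residual cardinality of `F` -/
  q : ℕ
  q_odd : Odd q
  one_lt_q : 1 < q
  /-- a non-square unit of `O_F` -/
  ε : E
  ε_fixed : σ ε = ε
  ε_ne_zero : ε ≠ 0
  ν_ε : ν ε = 0
  ε_nonsquare : ¬ ∃ f : E, σ f = f ∧ f * f = ε
  /-- a square root `√ε ∈ E` of `ε` -/
  sqε : E
  sqε_sq : sqε * sqε = ε
  sqε_conj : σ sqε = -sqε
  /-- `E = F(√ε)` -/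
  generates : ∀ x : E, ∃ a b : E, σ a = a ∧ σ b = b ∧ x = a + b * sqε
  /-- the norm maps `O_E^×` onto `O_F^×` -/
  norm_surj_units : ∀ y : E, σ y = y → y ≠ 0 → ν y = 0 →
    ∃ x : E, x ≠ 0 ∧ ν x = 0 ∧ x * σ x = y
  /-- the norm maps `1 + p_E^d` onto `1 + p_F^d` for every `d ≥ 1` -/
  norm_surj_one_add : ∀ d : ℤ, 1 ≤ d → ∀ y : E, σ y = y → (y - 1 = 0 ∨ d ≤ ν (y - 1)) →
    ∃ x : E, (x - 1 = 0 ∨ d ≤ ν (x - 1)) ∧ x * σ x = y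
  /-- the residue field of `F` has `q` elements -/
  residue_F : ∃ R : Finset E, R.card = q ∧ (∀ r ∈ R, σ r = r ∧ (r = 0 ∨ 0 ≤ ν r)) ∧
    ∀ x : E, σ x = x → (x = 0 ∨ 0 ≤ ν x) →
      ∃! r, r ∈ R ∧ (x - r = 0 ∨ 1 ≤ ν (x - r))
  /-- the residue field of `E` has `q²` elements -/
  residue_E : ∃ R : Finset E, R.card = q ^ 2 ∧ (∀ r ∈ R, r = 0 ∨ 0 ≤ ν r) ∧
    ∀ x : E, (x = 0 ∨ 0 ≤ ν x) →
      ∃! r, r ∈ R ∧ (x - r = 0 ∨ 1 ≤ ν (x - r))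
  /-- Hensel: a unit of `O_E` that is a square modulo `p_E` is a square (residue char. odd) -/
  hensel_sq : ∀ u w : E, u ≠ 0 → ν u = 0 → w ≠ 0 → ν w = 0 →
    (w * w - u = 0 ∨ 1 ≤ ν (w * w - u)) → ∃ v : E, v * v = u

namespace Setting

variable {E : Type*} [Field E] (S : Setting E)

/-- `x` lies in the ring of integers `O_E`. -/
def inOE (x : E) : Prop := x = 0 ∨ 0 ≤ S.ν x

/-- `x` lies in the (fractional, if `d ≤ 0`) ideal `p_E^d`. -/
def inpE (d : ℤ) (x : E) : Prop := x = 0 ∨ d ≤ S.ν x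

/-- `x` is a unit of `O_E`. -/
def unitOE (x : E) : Prop := x ≠ 0 ∧ S.ν x = 0

/-- `x` lies in the subfield `F` (the fixed field of `σ`). -/
def inF (x : E) : Prop := S.σ x = x

/-- `x` is a unit of `O_F`. -/
def unitOF (x : E) : Prop := S.σ x = x ∧ x ≠ 0 ∧ S.ν x = 0

/-- `x` lies in `E¹`, i.e. has norm one. -/
def normOne (x : E) : Prop := x * S.σ x = 1

/-- `x ∈ √ε·F`. -/
def inSqεF (x : E) : Prop := ∃ f : E, S.σ f = f ∧ x = S.sqε * f

/-- Entrywise application of `σ` to a matrix, `ḡ`. -/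
def mbar (g : Matrix (Fin 2) (Fin 2) E) : Matrix (Fin 2) (Fin 2) E :=
  Matrix.of fun i j => S.σ (g i j)

/-- The antidiagonal matrix `w = [[0,1],[1,0]]` defining the hermitian form. -/
def wmat (_S : Setting E) : Matrix (Fin 2) (Fin 2) E := !![0, 1; 1, 0]

/-- Membership in `G = U(1,1)(F) = {g : ḡᵀ·w·g = w}`. -/
def inG (g : Matrix (Fin 2) (Fin 2) E) : Prop :=
  (S.mbar g)ᵀ * S.wmat * g = S.wmat

/-- `G = U(1,1)(F)`, as a set of 2×2 matrices over `E`. -/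
def Gset : Set (Matrix (Fin 2) (Fin 2) E) := {g | S.inG g}

/-- `G_der = SU(1,1)(F) = {g ∈ G : det g = 1}`. -/
def Gder : Set (Matrix (Fin 2) (Fin 2) E) := {g | S.inG g ∧ g.det = 1}

/-- The standard maximal compact subgroup `K` of `G` (entries in `O_E`). -/
def Kset : Set (Matrix (Fin 2) (Fin 2) E) := {g | S.inG g ∧ ∀ i j, S.inOE (g i j)}

/-- The congruence subgroup `K_d = {k ∈ K : k − 1 ∈ p_E^d·M₂(O_E)}`. -/
def Kfil (d : ℤ) : Set (Matrix (Fin 2) (Fin 2) E) :=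
  {g | g ∈ S.Kset ∧ ∀ i j, S.inpE d ((g - 1) i j)}

/-- The subgroup `B` of upper triangular matrices in `K`. -/
def Bset : Set (Matrix (Fin 2) (Fin 2) E) := {g | g ∈ S.Kset ∧ g 1 0 = 0}

/-- The subgroup `B^op` of lower triangular matrices in `K`. -/
def Bop : Set (Matrix (Fin 2) (Fin 2) E) := {g | g ∈ S.Kset ∧ g 0 1 = 0}

/-- The center `Z = {z·I : z ∈ E¹}` of `G`. -/
def Zset : Set (Matrix (Fin 2) (Fin 2) E) :=
  {g | ∃ z : E, S.normOne z ∧ g = z • (1 : Matrix (Fin 2) (Fin 2) E)}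

/-- The matrix `α^t = diag(ϖ^{−t}, ϖ^t)`. -/
def αmat (t : ℕ) : Matrix (Fin 2) (Fin 2) E := !![(S.ϖ ^ t)⁻¹, 0; 0, S.ϖ ^ t]

/-- The matrix `η = diag(1, ϖ)` (it normalizes `G`). -/
def ηmat : Matrix (Fin 2) (Fin 2) E := !![1, 0; 0, S.ϖ]

/-- The matrix `η⁻¹ = diag(1, ϖ⁻¹)`. -/
def ηinv : Matrix (Fin 2) (Fin 2) E := !![1, 0; 0, S.ϖ⁻¹]

/-- The torus `T_{γ₁,γ₂} = {[[a,bγ₁],[bγ₂,a]] : a·ā + b·b̄·γ₁γ₂ = 1, ā·b ∈ √ε·F}`. -/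
def Tset (γ₁ γ₂ : E) : Set (Matrix (Fin 2) (Fin 2) E) :=
  {g | ∃ a b : E, g = !![a, b * γ₁; b * γ₂, a] ∧
    a * S.σ a + b * S.σ b * (γ₁ * γ₂) = 1 ∧ S.inSqεF (S.σ a * b)}

/-- The Moy–Prasad filtration subgroup `G_{y,r}` of `G` (for `r > 0`). -/
def Gfil (y r : ℚ) : Set (Matrix (Fin 2) (Fin 2) E) :=
  {g | S.inG g ∧ S.inpE ⌈r⌉ (g 0 0 - 1) ∧ S.inpE ⌈r⌉ (g 1 1 - 1) ∧
    S.inpE ⌈r - y⌉ (g 0 1) ∧ S.inpE ⌈r + y⌉ (g 1 0)}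

/-- `G_{y,0+} = ⋃_{r>0} G_{y,r}`. -/
def Gfil0plus (y : ℚ) : Set (Matrix (Fin 2) (Fin 2) E) :=
  {g | ∃ r : ℚ, 0 < r ∧ g ∈ S.Gfil y r}

end Setting

/-!
Let `GU_P` (`similitudes P`) be the set of `g` with `ḡᵀ w g = P w`. For `P ∈ F` with
`ν P ∈ {0, 1}`, `GU_P` is the disjoint union over `t ≥ 0` of the double cosets
`K diag(ϖ^{-t}, ϖ^t P) K`. For existence, multiply by powers of `w ∈ K` to bring an entry `a` of
minimal valuation to the top left corner; `ν a ≤ 0`, since otherwise `P = c̄ b + ā d` would lie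
in `p_E²`, and then
`g = [[1, 0], [c/a, 1]] · diag(ϖ^{-t}, ϖ^t P) · [[ϖ^t a, ϖ^t b], [0, (ϖ^t ā)⁻¹]]` with `t = -ν a`,
both outer factors lying in `K`. Uniqueness: the least valuation of an entry is invariant under
multiplication by `K` on either side, and equals `-t` on `diag(ϖ^{-t}, ϖ^t P)`.

The case `P = 1` is `K\G/K`. Right multiplication by `η` carries `G` onto `GU_ϖ` and
`K α^t K^η` onto `K (α^t η) K`, where `α^t η = diag(ϖ^{-t}, ϖ^{t+1})`; conjugation by `η` fixes
`α^t` and carries `K α^t K` onto `K^η α^t K^η`.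
-/

open Function

def IsDisjointUnion {α : Type*} (X : Set α) (C : ℕ → Set α) : Prop :=
  X = ⋃ t, C t ∧ Pairwise (Disjoint on C)

lemma IsDisjointUnion.of_preimage {α β : Type*} {X : Set α} {C : ℕ → Set α} {Y : Set β}
    {D : ℕ → Set β} (f : α → β) (h : IsDisjointUnion Y D) (hX : X = f ⁻¹' Y)
    (hC : ∀ t, C t = f ⁻¹' D t) : IsDisjointUnion X C := by
  obtain ⟨rfl, hD⟩ := h
  obtain rfl : C = fun t => f ⁻¹' D t := funext hC
  exact ⟨hX.trans Set.preimage_iUnion, fun s t hst => (hD hst).preimage f⟩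

lemma Set.mem_mul_singleton_mul {M : Type*} [Mul M] {A B : Set M} {m x : M} :
    x ∈ A * {m} * B ↔ ∃ a ∈ A, ∃ b ∈ B, a * m * b = x := by
  simp [Set.mem_mul]

namespace Setting

variable {E : Type*} [Field E] (S : Setting E)

lemma ν_one : S.ν 1 = 0 := by
  have := S.ν_mul (one_ne_zero (α := E)) one_ne_zero
  rw [mul_one] at this
  omega

lemma ν_inv {x : E} (hx : x ≠ 0) : S.ν x⁻¹ = -S.ν x := by
  have := S.ν_mul hx (inv_ne_zero hx)
  rw [mul_inv_cancel₀ hx, S.ν_one] at this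
  omega

lemma ν_ϖ_pow (n : ℕ) : S.ν (S.ϖ ^ n) = n := by
  induction n with
  | zero => simpa using S.ν_one
  | succ k ih =>
    rw [pow_succ, S.ν_mul (pow_ne_zero k S.ϖ_ne_zero) S.ϖ_ne_zero, ih, S.ν_ϖ]
    push_cast
    ring

lemma inpE_iff {n : ℤ} {x : E} (hx : x ≠ 0) : S.inpE n x ↔ n ≤ S.ν x := by
  simp [inpE, hx]

lemma inpE_add {n : ℤ} {x y : E} (hx : S.inpE n x) (hy : S.inpE n y) : S.inpE n (x + y) := by
  by_cases hx0 : x = 0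
  · simpa [hx0] using hy
  by_cases hy0 : y = 0
  · simpa [hy0] using hx
  by_cases hxy : x + y = 0
  · exact Or.inl hxy
  rw [S.inpE_iff hx0] at hx
  rw [S.inpE_iff hy0] at hy
  exact (S.inpE_iff hxy).mpr ((le_min hx hy).trans (S.ν_add hx0 hy0 hxy))

lemma inpE_sum {ι : Type*} (s : Finset ι) {n : ℤ} {f : ι → E} (h : ∀ i ∈ s, S.inpE n (f i)) :
    S.inpE n (∑ i ∈ s, f i) :=
  Finset.sum_induction f (S.inpE n) (fun _ _ => S.inpE_add) (Or.inl rfl) h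

lemma inpE_mul {m n : ℤ} {x y : E} (hx : S.inpE m x) (hy : S.inpE n y) :
    S.inpE (m + n) (x * y) := by
  by_cases hx0 : x = 0
  · simp [inpE, hx0]
  by_cases hy0 : y = 0
  · simp [inpE, hy0]
  rw [S.inpE_iff hx0] at hx
  rw [S.inpE_iff hy0] at hy
  rw [S.inpE_iff (mul_ne_zero hx0 hy0), S.ν_mul hx0 hy0]
  omega

lemma inpE_mono {m n : ℤ} (hmn : m ≤ n) {x : E} (hx : S.inpE n x) : S.inpE m x :=
  hx.imp_right hmn.trans

lemma inpE_σ {n : ℤ} {x : E} (hx : S.inpE n x) : S.inpE n (S.σ x) := by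
  rcases hx with rfl | hx
  · exact Or.inl (map_zero S.σ)
  · exact Or.inr (by rwa [S.ν_σ])

def entriesIn {m n : Type*} (d : ℤ) (A : Matrix m n E) : Prop := ∀ i j, S.inpE d (A i j)

lemma entriesIn_mul {l m n : Type*} [Fintype m] {d e : ℤ} {A : Matrix l m E} {B : Matrix m n E}
    (hA : S.entriesIn d A) (hB : S.entriesIn e B) : S.entriesIn (d + e) (A * B) :=
  fun i k => S.inpE_sum _ fun j _ => S.inpE_mul (hA i j) (hB j k)

lemma exists_pivot {m n : Type*} [Fintype m] [Fintype n] {A : Matrix m n E} (hA : A ≠ 0) :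
    ∃ i j, A i j ≠ 0 ∧ S.entriesIn (S.ν (A i j)) A := by
  classical
  obtain ⟨i, j, hij⟩ : ∃ i j, A i j ≠ 0 := by
    by_contra! h
    exact hA (Matrix.ext h)
  obtain ⟨⟨i, j⟩, hmem, hmin⟩ :=
    (Finset.univ.filter fun p : m × n => A p.1 p.2 ≠ 0).exists_min_image
      (fun p => S.ν (A p.1 p.2)) ⟨(i, j), by simpa using hij⟩
  refine ⟨i, j, (Finset.mem_filter.mp hmem).2, fun k l => ?_⟩
  by_cases hkl : A k l = 0
  · exact Or.inl hkl
  · exact Or.inr (hmin (k, l) (by simpa using hkl))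

lemma mbar_mul (A B : Matrix (Fin 2) (Fin 2) E) : S.mbar (A * B) = S.mbar A * S.mbar B :=
  Matrix.map_mul

lemma mbar_one : S.mbar (1 : Matrix (Fin 2) (Fin 2) E) = 1 :=
  Matrix.map_one _ (map_zero _) (map_one _)

lemma entriesIn_mbar_transpose {d : ℤ} {A : Matrix (Fin 2) (Fin 2) E} (hA : S.entriesIn d A) :
    S.entriesIn d (S.mbar A)ᵀ :=
  fun i j => S.inpE_σ (hA j i)

def similitudes (P : E) : Set (Matrix (Fin 2) (Fin 2) E) :=
  {g | (S.mbar g)ᵀ * S.wmat * g = P • S.wmat}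

lemma Gset_eq_similitudes_one : S.Gset = S.similitudes 1 := by
  ext g
  simp [Gset, inG, similitudes]

lemma mul_mem_similitudes {P Q : E} {A B : Matrix (Fin 2) (Fin 2) E}
    (hA : A ∈ S.similitudes P) (hB : B ∈ S.similitudes Q) : A * B ∈ S.similitudes (P * Q) := by
  change (S.mbar B)ᵀ * S.wmat * B = Q • S.wmat at hB
  calc (S.mbar (A * B))ᵀ * S.wmat * (A * B)
      = (S.mbar B)ᵀ * ((S.mbar A)ᵀ * S.wmat * A) * B := by
        rw [S.mbar_mul, transpose_mul]; simp only [mul_assoc]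
    _ = (P * Q) • S.wmat := by
        rw [hA, Matrix.mul_smul, Matrix.smul_mul, hB, smul_smul]

lemma mem_similitudes_of_mul_eq_one {P : E} (hP : P ≠ 0) {A B : Matrix (Fin 2) (Fin 2) E}
    (hA : A ∈ S.similitudes P) (hBA : B * A = 1) : B ∈ S.similitudes P⁻¹ := by
  have hw : S.wmat = P⁻¹ • ((S.mbar A)ᵀ * S.wmat * A) := by
    rw [hA, smul_smul, inv_mul_cancel₀ hP, one_smul]
  calc (S.mbar B)ᵀ * S.wmat * B
      = P⁻¹ • ((S.mbar (A * B))ᵀ * S.wmat * (A * B)) := by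
        conv_lhs => rw [hw]
        simp only [S.mbar_mul, transpose_mul, Matrix.mul_smul, Matrix.smul_mul, mul_assoc]
    _ = P⁻¹ • S.wmat := by
        rw [mul_eq_one_comm.mp hBA, S.mbar_one, transpose_one, one_mul, mul_one]

lemma ne_zero_of_mem_similitudes {P : E} (hP : P ≠ 0) {g : Matrix (Fin 2) (Fin 2) E}
    (hg : g ∈ S.similitudes P) : g ≠ 0 := by
  rintro rfl
  exact hP (by simpa [wmat] using (congrFun (congrFun hg 0) 1).symm)

def SimilitudeEqns (P a b c d : E) : Prop :=
  S.σ c * a + S.σ a * c = 0 ∧ S.σ c * b + S.σ a * d = P ∧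
  S.σ d * a + S.σ b * c = P ∧ S.σ d * b + S.σ b * d = 0

lemma mem_similitudes_iff (P a b c d : E) :
    !![a, b; c, d] ∈ S.similitudes P ↔ S.SimilitudeEqns P a b c d := by
  simp only [similitudes, mbar, wmat, Set.mem_ofPred_eq, ← Matrix.ext_iff, Fin.forall_fin_two]
  simp [Matrix.mul_apply, Fin.sum_univ_two, SimilitudeEqns, and_assoc]

lemma diag_mem_similitudes {P x y : E} (hxy : S.σ x * y = P) (hyx : S.σ y * x = P) :
    !![x, 0; 0, y] ∈ S.similitudes P := by
  simp [mem_similitudes_iff, SimilitudeEqns, hxy, hyx]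

lemma wmat_mem_similitudes : S.wmat ∈ S.similitudes 1 := by
  simp [wmat, mem_similitudes_iff, SimilitudeEqns]

def cartanDiag (t : ℕ) (P : E) : Matrix (Fin 2) (Fin 2) E :=
  !![(S.ϖ ^ t)⁻¹, 0; 0, S.ϖ ^ t * P]

lemma cartanDiag_mem_similitudes (t : ℕ) {P : E} (hP : S.σ P = P) :
    S.cartanDiag t P ∈ S.similitudes P := by
  have hϖ : S.ϖ ^ t ≠ 0 := pow_ne_zero t S.ϖ_ne_zero
  apply S.diag_mem_similitudes <;> simp only [map_inv₀, map_mul, map_pow, S.ϖ_fixed, hP] <;>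
    field_simp

lemma cartanDiag_one (t : ℕ) : S.cartanDiag t 1 = S.αmat t := by
  simp [cartanDiag, αmat]

lemma αmat_mul_ηmat (t : ℕ) : S.αmat t * S.ηmat = S.cartanDiag t S.ϖ := by
  simp [cartanDiag, αmat, ηmat]

lemma ηmat_mul_αmat (t : ℕ) : S.ηmat * S.αmat t = S.cartanDiag t S.ϖ := by
  simp [cartanDiag, αmat, ηmat, mul_comm]

lemma ηmat_mul_ηinv : S.ηmat * S.ηinv = 1 := by
  simp [ηmat, ηinv, S.ϖ_ne_zero, Matrix.one_fin_two]

lemma ηinv_mul_ηmat : S.ηinv * S.ηmat = 1 := by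
  simp [ηmat, ηinv, S.ϖ_ne_zero, Matrix.one_fin_two]

lemma ηmat_mem_similitudes : S.ηmat ∈ S.similitudes S.ϖ :=
  S.diag_mem_similitudes (by simp) (by simp [S.ϖ_fixed])

lemma ηinv_mem_similitudes : S.ηinv ∈ S.similitudes S.ϖ⁻¹ :=
  S.mem_similitudes_of_mul_eq_one S.ϖ_ne_zero S.ηmat_mem_similitudes S.ηinv_mul_ηmat

lemma mem_Kset_iff {g : Matrix (Fin 2) (Fin 2) E} :
    g ∈ S.Kset ↔ g ∈ S.similitudes 1 ∧ S.entriesIn 0 g := by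
  rw [← Gset_eq_similitudes_one]
  rfl

def Kmonoid : Submonoid (Matrix (Fin 2) (Fin 2) E) where
  carrier := S.Kset
  mul_mem' {A B} hA hB := by
    rw [mem_Kset_iff] at *
    exact ⟨by simpa using S.mul_mem_similitudes hA.1 hB.1, by simpa using S.entriesIn_mul hA.2 hB.2⟩
  one_mem' := by
    rw [mem_Kset_iff, Matrix.one_fin_two]
    refine ⟨S.diag_mem_similitudes (by simp) (by simp), ?_⟩
    simp [entriesIn, Fin.forall_fin_two, inpE, S.ν_one]

lemma wmat_mem_Kset : S.wmat ∈ S.Kset := by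
  refine S.mem_Kset_iff.mpr ⟨S.wmat_mem_similitudes, ?_⟩
  simp [entriesIn, wmat, Fin.forall_fin_two, inpE, S.ν_one]

lemma wmat_mul_wmat : S.wmat * S.wmat = 1 := by
  simp [wmat, Matrix.one_fin_two]

lemma exists_inv_mem_Kset {A : Matrix (Fin 2) (Fin 2) E} (hA : A ∈ S.Kset) :
    ∃ B ∈ S.Kset, B * A = 1 ∧ A * B = 1 := by
  rw [mem_Kset_iff] at hA
  have hBA : S.wmat * (S.mbar A)ᵀ * S.wmat * A = 1 := by
    have := hA.1
    simp only [similitudes, Set.mem_ofPred_eq, one_smul, mul_assoc] at this ⊢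
    rw [this, wmat_mul_wmat]
  refine ⟨_, S.mem_Kset_iff.mpr ⟨?_, ?_⟩, hBA, mul_eq_one_comm.mp hBA⟩
  · simpa using S.mem_similitudes_of_mul_eq_one one_ne_zero hA.1 hBA
  · have hw : S.entriesIn 0 S.wmat := (S.mem_Kset_iff.mp S.wmat_mem_Kset).2
    simpa using S.entriesIn_mul (S.entriesIn_mul hw (S.entriesIn_mbar_transpose hA.2)) hw

lemma mul_mem_doubleCoset {k k' m x : Matrix (Fin 2) (Fin 2) E} (hk : k ∈ S.Kset)
    (hk' : k' ∈ S.Kset) (hx : x ∈ S.Kset * {m} * S.Kset) :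
    k * x * k' ∈ S.Kset * {m} * S.Kset := by
  obtain ⟨a, ha, b, hb, rfl⟩ := Set.mem_mul_singleton_mul.mp hx
  refine Set.mem_mul_singleton_mul.mpr
    ⟨k * a, S.Kmonoid.mul_mem hk ha, b * k', S.Kmonoid.mul_mem hb hk', ?_⟩
  simp only [mul_assoc]

lemma mem_doubleCoset_symm {m x : Matrix (Fin 2) (Fin 2) E}
    (hx : x ∈ S.Kset * {m} * S.Kset) : m ∈ S.Kset * {x} * S.Kset := by
  obtain ⟨a, ha, b, hb, rfl⟩ := Set.mem_mul_singleton_mul.mp hx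
  obtain ⟨a', ha', haa', -⟩ := S.exists_inv_mem_Kset ha
  obtain ⟨b', hb', -, hbb'⟩ := S.exists_inv_mem_Kset hb
  refine Set.mem_mul_singleton_mul.mpr ⟨a', ha', b', hb', ?_⟩
  calc a' * (a * m * b) * b' = (a' * a) * m * (b * b') := by simp only [mul_assoc]
    _ = m := by rw [haa', hbb', one_mul, mul_one]

lemma entriesIn_of_mem_doubleCoset {d : ℤ} {m x : Matrix (Fin 2) (Fin 2) E}
    (hx : x ∈ S.Kset * {m} * S.Kset) (hm : S.entriesIn d m) : S.entriesIn d x := by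
  obtain ⟨a, ha, b, hb, rfl⟩ := Set.mem_mul_singleton_mul.mp hx
  simpa using S.entriesIn_mul (S.entriesIn_mul (S.mem_Kset_iff.mp ha).2 hm)
    (S.mem_Kset_iff.mp hb).2

lemma entriesIn_cartanDiag (t : ℕ) {P : E} (hP : S.inOE P) :
    S.entriesIn (-t) (S.cartanDiag t P) := by
  have hϖ : S.inpE (-t) (S.ϖ ^ t)⁻¹ :=
    Or.inr (by rw [S.ν_inv (pow_ne_zero t S.ϖ_ne_zero), S.ν_ϖ_pow])
  have hϖP : S.inpE (-t) (S.ϖ ^ t * P) :=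
    S.inpE_mono (by omega) (S.inpE_mul (Or.inr (S.ν_ϖ_pow t).ge) hP)
  have h0 : S.inpE (-t) (0 : E) := Or.inl rfl
  simp [entriesIn, cartanDiag, Fin.forall_fin_two, hϖ, hϖP, h0]

lemma not_entriesIn_cartanDiag {s t : ℕ} (hst : s < t) (P : E) :
    ¬ S.entriesIn (-s) (S.cartanDiag t P) := fun h => by
  have hϖ : (S.ϖ ^ t)⁻¹ ≠ 0 := inv_ne_zero (pow_ne_zero t S.ϖ_ne_zero)
  have := (S.inpE_iff hϖ).mp (h 0 0)
  rw [S.ν_inv (pow_ne_zero t S.ϖ_ne_zero), S.ν_ϖ_pow] at this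
  omega

theorem pairwise_disjoint_doubleCoset_cartanDiag {P : E} (hP : S.inOE P) :
    Pairwise (Disjoint on (fun t => S.Kset * {S.cartanDiag t P} * S.Kset)) := by
  refine (pairwise_disjoint_on _).mpr fun s t hst => Set.disjoint_left.mpr fun x hs ht => ?_
  exact S.not_entriesIn_cartanDiag hst P <| S.entriesIn_of_mem_doubleCoset
    (S.mem_doubleCoset_symm ht) (S.entriesIn_of_mem_doubleCoset hs (S.entriesIn_cartanDiag s hP))

lemma mem_Kset_iff_similitudeEqns {a b c d : E} : !![a, b; c, d] ∈ S.Kset ↔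
    S.SimilitudeEqns 1 a b c d ∧ S.inOE a ∧ S.inOE b ∧ S.inOE c ∧ S.inOE d := by
  simp [mem_Kset_iff, mem_similitudes_iff, entriesIn, Fin.forall_fin_two, inOE, inpE, and_assoc]

lemma lowerUnipotent_mem_Kset {x : E} (hx : S.inOE x) (hσx : S.σ x + x = 0) :
    !![1, 0; x, 1] ∈ S.Kset := by
  have h1 : S.inOE 1 := Or.inr S.ν_one.ge
  exact S.mem_Kset_iff_similitudeEqns.mpr ⟨by simp [SimilitudeEqns, hσx], h1, Or.inl rfl, hx, h1⟩

lemma upperTriangular_mem_Kset {x y : E} (hx0 : x ≠ 0) (hx : S.ν x = 0) (hy : S.inOE y)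
    (hxy : y * S.σ x + x * S.σ y = 0) : !![x, y; 0, (S.σ x)⁻¹] ∈ S.Kset := by
  have hσx : S.σ x ≠ 0 := (map_ne_zero S.σ).mpr hx0
  refine S.mem_Kset_iff_similitudeEqns.mpr ⟨⟨by simp, by simp [hσx], by simp [S.σσ, hx0], ?_⟩,
    Or.inr hx.ge, hy, Or.inl rfl, Or.inr ?_⟩
  · simp only [map_inv₀, S.σσ]
    field_simp
    linear_combination hxy
  · rw [S.ν_inv hσx, S.ν_σ, hx, neg_zero]

lemma mem_doubleCoset_of_pivot {P : E} (hP : P ≠ 0) (hσP : S.σ P = P)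
    {g : Matrix (Fin 2) (Fin 2) E} (hg : g ∈ S.similitudes P) (h0 : g 0 0 ≠ 0)
    (hν : S.ν (g 0 0) ≤ 0) (hent : S.entriesIn (S.ν (g 0 0)) g) :
    g ∈ S.Kset * {S.cartanDiag (-S.ν (g 0 0)).toNat P} * S.Kset := by
  obtain ⟨a, b, c, d, rfl⟩ : ∃ a b c d, g = !![a, b; c, d] := ⟨_, _, _, _, g.eta_fin_two⟩
  simp only [of_apply, cons_val', cons_val_zero, empty_val', cons_val_fin_one] at h0 hν hent ⊢
  obtain ⟨h1, h2, h3, h4⟩ := (S.mem_similitudes_iff P a b c d).mp hg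
  set t := (-S.ν a).toNat
  have ht : (t : ℤ) = -S.ν a := Int.toNat_of_nonneg (by omega)
  have hϖ : S.ϖ ^ t ≠ 0 := pow_ne_zero t S.ϖ_ne_zero
  have hσa : S.σ a ≠ 0 := (map_ne_zero S.σ).mpr h0
  have hϖν : S.inpE t (S.ϖ ^ t) := Or.inr (S.ν_ϖ_pow t).ge
  have hW : b * S.σ a + a * S.σ b = 0 := by
    refine (mul_eq_zero.mp ?_).resolve_left hP
    linear_combination (-(S.σ a * b)) * h3 - (a * S.σ b) * h2
      + (S.σ a * a) * h4 + (S.σ b * b) * h1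
  have hd : d * S.σ a + b * S.σ c = P := by
    simpa only [map_add, map_mul, S.σσ, hσP] using congrArg S.σ h3
  refine Set.mem_mul_singleton_mul.mpr ⟨!![1, 0; c * a⁻¹, 1], ?_,
    !![S.ϖ ^ t * a, S.ϖ ^ t * b; 0, (S.σ (S.ϖ ^ t * a))⁻¹], ?_, ?_⟩
  · refine S.lowerUnipotent_mem_Kset ?_ ?_
    · have := S.inpE_mul (hent 1 0) (Or.inr (S.ν_inv h0).ge : S.inpE (-S.ν a) a⁻¹)
      rwa [add_neg_cancel] at this
    · simp only [map_mul, map_inv₀]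
      field_simp
      linear_combination h1
  · refine S.upperTriangular_mem_Kset (mul_ne_zero hϖ h0) ?_ ?_ ?_
    · rw [S.ν_mul hϖ h0, S.ν_ϖ_pow]; omega
    · exact S.inpE_mono (by omega) (S.inpE_mul hϖν (hent 0 1))
    · simp only [map_mul, map_pow, S.ϖ_fixed]
      linear_combination (S.ϖ ^ t) ^ 2 * hW
  · simp only [cartanDiag, Matrix.mul_fin_two, map_mul, map_pow, S.ϖ_fixed]
    ext i j
    fin_cases i <;> fin_cases j <;>
      simp only [Fin.zero_eta, Fin.mk_one, Fin.isValue, of_apply, cons_val', cons_val_zero,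
        cons_val_one, cons_val_fin_one, one_mul, mul_zero, add_zero, zero_mul, zero_add,
        _root_.mul_inv_rev] <;>
      field_simp
    linear_combination b * h1 - a * hd

lemma two_mul_le_ν_of_entriesIn {P : E} (hP : P ≠ 0) {g : Matrix (Fin 2) (Fin 2) E}
    (hg : g ∈ S.similitudes P) {n : ℤ} (hn : S.entriesIn n g) : 2 * n ≤ S.ν P := by
  have hw : S.entriesIn 0 S.wmat := (S.mem_Kset_iff.mp S.wmat_mem_Kset).2
  have := S.entriesIn_mul (S.entriesIn_mul (S.entriesIn_mbar_transpose hn) hw) hn 0 1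
  have hP01 : (P • S.wmat) 0 1 = P := by simp [wmat]
  rw [show (S.mbar g)ᵀ * S.wmat * g = P • S.wmat from hg, hP01, S.inpE_iff hP] at this
  omega

lemma exists_swap_to_topLeft (g : Matrix (Fin 2) (Fin 2) E) (i j : Fin 2) :
    ∃ u ∈ S.Kset, u * u = 1 ∧ ∃ v ∈ S.Kset, v * v = 1 ∧ (u * g * v) 0 0 = g i j := by
  have hsq (n : ℕ) : S.wmat ^ n * S.wmat ^ n = 1 := by
    rw [← pow_add, ← two_mul, pow_mul, sq, S.wmat_mul_wmat, one_pow]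
  refine ⟨S.wmat ^ (i : ℕ), S.Kmonoid.pow_mem S.wmat_mem_Kset _, hsq _,
    S.wmat ^ (j : ℕ), S.Kmonoid.pow_mem S.wmat_mem_Kset _, hsq _, ?_⟩
  fin_cases i <;> fin_cases j <;>
    simp [wmat, Matrix.mul_apply, Matrix.vecMul, dotProduct, Fin.sum_univ_two]

theorem exists_mem_doubleCoset_cartanDiag {P : E} (hP : P ≠ 0) (hσP : S.σ P = P)
    (hνP : S.ν P ≤ 1) {g : Matrix (Fin 2) (Fin 2) E} (hg : g ∈ S.similitudes P) :
    ∃ t : ℕ, g ∈ S.Kset * {S.cartanDiag t P} * S.Kset := by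
  obtain ⟨i, j, hij, hpiv⟩ := S.exists_pivot (S.ne_zero_of_mem_similitudes hP hg)
  have hνij : S.ν (g i j) ≤ 0 := by
    have := S.two_mul_le_ν_of_entriesIn hP hg hpiv
    omega
  obtain ⟨u, hu, huu, v, hv, hvv, h00⟩ := S.exists_swap_to_topLeft g i j
  have hsim : u * g * v ∈ S.similitudes P := by
    simpa using S.mul_mem_similitudes
      (S.mul_mem_similitudes (S.mem_Kset_iff.mp hu).1 hg) (S.mem_Kset_iff.mp hv).1
  have hent : S.entriesIn (S.ν (g i j)) (u * g * v) := by
    simpa using S.entriesIn_mul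
      (S.entriesIn_mul (S.mem_Kset_iff.mp hu).2 hpiv) (S.mem_Kset_iff.mp hv).2
  rw [← h00] at hij hνij hent
  have hg' : g = u * (u * g * v) * v := by
    simp only [← mul_assoc, huu, one_mul]
    rw [mul_assoc, hvv, mul_one]
  have := S.mul_mem_doubleCoset hu hv (S.mem_doubleCoset_of_pivot hP hσP hsim hij hνij hent)
  rw [← hg'] at this
  exact ⟨_, this⟩

theorem isDisjointUnion_similitudes {P : E} (hP : P ≠ 0) (hσP : S.σ P = P) (hνP₀ : 0 ≤ S.ν P)
    (hνP₁ : S.ν P ≤ 1) :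
    IsDisjointUnion (S.similitudes P) fun t => S.Kset * {S.cartanDiag t P} * S.Kset := by
  refine ⟨Set.ext fun g => ⟨fun hg => Set.mem_iUnion.mpr
    (S.exists_mem_doubleCoset_cartanDiag hP hσP hνP₁ hg), fun hg => ?_⟩,
    S.pairwise_disjoint_doubleCoset_cartanDiag (Or.inr hνP₀)⟩
  obtain ⟨t, ht⟩ := Set.mem_iUnion.mp hg
  obtain ⟨a, ha, b, hb, rfl⟩ := Set.mem_mul_singleton_mul.mp ht
  simpa using S.mul_mem_similitudes (S.mul_mem_similitudes (S.mem_Kset_iff.mp ha).1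
    (S.cartanDiag_mem_similitudes t hσP)) (S.mem_Kset_iff.mp hb).1

def Kη : Set (Matrix (Fin 2) (Fin 2) E) := (fun k => S.ηmat * k * S.ηinv) '' S.Kset

lemma ηmat_mul_ηinv_mul (x : Matrix (Fin 2) (Fin 2) E) : S.ηmat * (S.ηinv * x) = x := by
  rw [← mul_assoc, S.ηmat_mul_ηinv, one_mul]

lemma ηinv_mul_ηmat_mul (x : Matrix (Fin 2) (Fin 2) E) : S.ηinv * (S.ηmat * x) = x := by
  rw [← mul_assoc, S.ηinv_mul_ηmat, one_mul]

lemma ηinv_mul_αmat_mul_ηmat (t : ℕ) : S.ηinv * S.αmat t * S.ηmat = S.αmat t := by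
  rw [mul_assoc, S.αmat_mul_ηmat, ← S.ηmat_mul_αmat, S.ηinv_mul_ηmat_mul]

lemma similitudes_one_eq_preimage_mul_ηmat :
    S.similitudes 1 = (· * S.ηmat) ⁻¹' S.similitudes S.ϖ := by
  ext g
  refine ⟨fun hg => by simpa using S.mul_mem_similitudes hg S.ηmat_mem_similitudes, fun hg => ?_⟩
  have := S.mul_mem_similitudes hg S.ηinv_mem_similitudes
  rwa [mul_assoc, S.ηmat_mul_ηinv, mul_one, mul_inv_cancel₀ S.ϖ_ne_zero] at this

lemma doubleCoset_Kη_eq_preimage_mul_ηmat (t : ℕ) :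
    S.Kset * {S.αmat t} * S.Kη =
      (· * S.ηmat) ⁻¹' (S.Kset * {S.cartanDiag t S.ϖ} * S.Kset) := by
  ext g
  simp only [Set.mem_preimage, Set.mem_mul_singleton_mul, Kη, Set.exists_mem_image]
  constructor
  · rintro ⟨k₁, hk₁, k₂, hk₂, rfl⟩
    refine ⟨k₁, hk₁, k₂, hk₂, ?_⟩
    rw [← S.αmat_mul_ηmat]
    simp only [mul_assoc, S.ηinv_mul_ηmat, mul_one]
  · rintro ⟨k₁, hk₁, k₂, hk₂, hg⟩
    refine ⟨k₁, hk₁, k₂, hk₂, ?_⟩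
    calc k₁ * S.αmat t * (S.ηmat * k₂ * S.ηinv) = k₁ * (S.αmat t * S.ηmat) * k₂ * S.ηinv := by
          simp only [mul_assoc]
      _ = g := by rw [S.αmat_mul_ηmat, hg, mul_assoc, S.ηmat_mul_ηinv, mul_one]

lemma similitudes_one_eq_preimage_conj :
    S.similitudes 1 = (fun g => S.ηinv * g * S.ηmat) ⁻¹' S.similitudes 1 := by
  ext g
  refine ⟨fun hg => ?_, fun hg => ?_⟩
  · have := S.mul_mem_similitudes (S.mul_mem_similitudes S.ηinv_mem_similitudes hg)
      S.ηmat_mem_similitudes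
    rwa [mul_one, inv_mul_cancel₀ S.ϖ_ne_zero] at this
  · have := S.mul_mem_similitudes (S.mul_mem_similitudes S.ηmat_mem_similitudes hg)
      S.ηinv_mem_similitudes
    rwa [mul_one, mul_inv_cancel₀ S.ϖ_ne_zero, mul_assoc, mul_assoc, S.ηmat_mul_ηinv, mul_one,
      S.ηmat_mul_ηinv_mul] at this

lemma doubleCoset_Kη_Kη_eq_preimage_conj (t : ℕ) :
    S.Kη * {S.αmat t} * S.Kη =
      (fun g => S.ηinv * g * S.ηmat) ⁻¹' (S.Kset * {S.αmat t} * S.Kset) := by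
  ext g
  simp only [Set.mem_preimage, Set.mem_mul_singleton_mul, Kη, Set.exists_mem_image]
  constructor
  · rintro ⟨k₁, hk₁, k₂, hk₂, rfl⟩
    refine ⟨k₁, hk₁, k₂, hk₂, ?_⟩
    calc k₁ * S.αmat t * k₂ = k₁ * (S.ηinv * S.αmat t * S.ηmat) * k₂ := by
          rw [S.ηinv_mul_αmat_mul_ηmat]
      _ = _ := by simp only [mul_assoc, S.ηinv_mul_ηmat_mul, S.ηinv_mul_ηmat, mul_one]
  · rintro ⟨k₁, hk₁, k₂, hk₂, hg⟩
    refine ⟨k₁, hk₁, k₂, hk₂, ?_⟩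
    calc S.ηmat * k₁ * S.ηinv * S.αmat t * (S.ηmat * k₂ * S.ηinv)
        = S.ηmat * (k₁ * (S.ηinv * S.αmat t * S.ηmat) * k₂) * S.ηinv := by
          simp only [mul_assoc]
      _ = g := by
          rw [S.ηinv_mul_αmat_mul_ηmat, hg]
          simp only [mul_assoc, S.ηmat_mul_ηinv_mul, S.ηmat_mul_ηinv, mul_one]

end Setting

/-- With `α^t = diag(ϖ^{−t}, ϖ^t)` and `K^η = ηKη⁻¹`, the family
`{α^t : t ∈ ℤ_{≥0}}` is a complete and irredundant set of double coset representatives for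
`K\G/K`, `K\G/K^η` and `K^η\G/K^η`: in each case `G` is the union of the corresponding
double cosets of the `α^t`, `t ≥ 0`, and these double cosets are pairwise disjoint. -/
theorem statement4 {E : Type*} [Field E] (S : Setting E) :
    let Kη : Set (Matrix (Fin 2) (Fin 2) E) := (fun k => S.ηmat * k * S.ηinv) '' S.Kset
    -- K\G/K
    ((S.Gset = ⋃ t : ℕ, S.Kset * {S.αmat t} * S.Kset) ∧
      (∀ s t : ℕ, s ≠ t →
        Disjoint (S.Kset * {S.αmat s} * S.Kset) (S.Kset * {S.αmat t} * S.Kset))) ∧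
    -- K\G/K^η
    ((S.Gset = ⋃ t : ℕ, S.Kset * {S.αmat t} * Kη) ∧
      (∀ s t : ℕ, s ≠ t →
        Disjoint (S.Kset * {S.αmat s} * Kη) (S.Kset * {S.αmat t} * Kη))) ∧
    -- K^η\G/K^η
    ((S.Gset = ⋃ t : ℕ, Kη * {S.αmat t} * Kη) ∧
      (∀ s t : ℕ, s ≠ t →
        Disjoint (Kη * {S.αmat s} * Kη) (Kη * {S.αmat t} * Kη))) := by
  intro Kη
  have hK : IsDisjointUnion (S.similitudes 1) fun t => S.Kset * {S.αmat t} * S.Kset := by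
    simpa only [S.cartanDiag_one] using
      S.isDisjointUnion_similitudes one_ne_zero (map_one S.σ) S.ν_one.ge (by simp [S.ν_one])
  have hKη : IsDisjointUnion (S.similitudes S.ϖ) fun t =>
      S.Kset * {S.cartanDiag t S.ϖ} * S.Kset :=
    S.isDisjointUnion_similitudes S.ϖ_ne_zero S.ϖ_fixed (by simp [S.ν_ϖ]) S.ν_ϖ.le
  rw [S.Gset_eq_similitudes_one]
  exact ⟨hK,
    hKη.of_preimage (· * S.ηmat) S.similitudes_one_eq_preimage_mul_ηmat
      S.doubleCoset_Kη_eq_preimage_mul_ηmat,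
    hK.of_preimage (fun g => S.ηinv * g * S.ηmat) S.similitudes_one_eq_preimage_conj
      S.doubleCoset_Kη_Kη_eq_preimage_conj⟩
end
end

section
/- Let G be a group and let J ⊆ K be subgroups of G. Suppose B ⊆ G is a set of double coset representatives for K\G/K, and for each g ∈ B let A_g ⊆ K be a set of double coset representatives for (K ∩ g^{−1}Kg)\K/J. Then {g·h : g ∈ B, h ∈ A_g} is a set of double coset representatives for K\G/J. -/
open scoped Pointwise

private lemma mem3 {G : Type*} [Group G] (S T : Set G) (g x : G) :
    x ∈ S * {g} * T ↔ ∃ s ∈ S, ∃ t ∈ T, s * g * t = x := by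
  simp only [Set.mem_mul, Set.mem_singleton_iff]
  constructor
  · rintro ⟨_, ⟨s, hs, y, rfl, rfl⟩, t, ht, rfl⟩
    exact ⟨s, hs, t, ht, rfl⟩
  · rintro ⟨s, hs, t, ht, rfl⟩
    exact ⟨s * g, ⟨s, hs, g, rfl, rfl⟩, t, ht, rfl⟩

/-- Let `J ⊆ K` be subgroups of a group `G`.  If `B` is a set of double
coset representatives for `K\G/K` and, for each `g ∈ B`, `A g ⊆ K` is a set of double coset
representatives for `(K ∩ g⁻¹Kg)\K/J`, then `{g·h : g ∈ B, h ∈ A g}` is a set of double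
coset representatives for `K\G/J` (every double coset `K·x·J` contains exactly one such
product). -/
theorem statement5 {G : Type*} [Group G] (K J : Subgroup G) (hJK : J ≤ K)
    (B : Set G)
    (hB_cover : ∀ g : G, ∃ b ∈ B, g ∈ (K : Set G) * {b} * (K : Set G))
    (hB_unique : ∀ b₁ ∈ B, ∀ b₂ ∈ B,
      (((K : Set G) * {b₁} * (K : Set G)) ∩ ((K : Set G) * {b₂} * (K : Set G))).Nonempty →
      b₁ = b₂)
    (A : G → Set G)
    (hA_sub : ∀ g ∈ B, A g ⊆ (K : Set G))
    (hA_cover : ∀ g ∈ B, ∀ k ∈ (K : Set G), ∃ a ∈ A g,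
      k ∈ ((K : Set G) ∩ ((fun x => g⁻¹ * x * g) '' (K : Set G))) * {a} * (J : Set G))
    (hA_unique : ∀ g ∈ B, ∀ a₁ ∈ A g, ∀ a₂ ∈ A g,
      (((((K : Set G) ∩ ((fun x => g⁻¹ * x * g) '' (K : Set G))) * {a₁} * (J : Set G))) ∩
        ((((K : Set G) ∩ ((fun x => g⁻¹ * x * g) '' (K : Set G))) * {a₂} * (J : Set G)))).Nonempty →
      a₁ = a₂) :
    -- `{g·h : g ∈ B, h ∈ A g}` covers `G` ...
    (∀ x : G, ∃ g ∈ B, ∃ h ∈ A g, x ∈ (K : Set G) * {g * h} * (J : Set G)) ∧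
    -- ... and is irredundant
    (∀ g₁ ∈ B, ∀ h₁ ∈ A g₁, ∀ g₂ ∈ B, ∀ h₂ ∈ A g₂,
      (((K : Set G) * {g₁ * h₁} * (J : Set G)) ∩
        ((K : Set G) * {g₂ * h₂} * (J : Set G))).Nonempty →
      g₁ * h₁ = g₂ * h₂) := by
  constructor
  · -- covering
    intro x
    obtain ⟨b, hb, hx⟩ := hB_cover x
    rw [mem3] at hx
    obtain ⟨k₁, hk₁, k₂, hk₂, hx⟩ := hx
    obtain ⟨a, ha, hk⟩ := hA_cover b hb k₂ hk₂
    rw [mem3] at hk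
    obtain ⟨c, hc, j, hj, hck⟩ := hk
    obtain ⟨hcK, k', hk', hck'⟩ := hc
    refine ⟨b, hb, a, ha, ?_⟩
    rw [mem3]
    refine ⟨k₁ * k', K.mul_mem hk₁ hk', j, hj, ?_⟩
    rw [← hx, ← hck]
    simp only at hck'
    rw [← hck']
    group
  · -- irredundancy
    rintro g₁ hg₁ h₁ hh₁ g₂ hg₂ h₂ hh₂ ⟨x, hx₁, hx₂⟩
    rw [mem3] at hx₁ hx₂
    obtain ⟨k, hk, j, hj, e₁⟩ := hx₁
    obtain ⟨k', hk', j', hj', e₂⟩ := hx₂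
    have hg : g₁ = g₂ := by
      refine hB_unique g₁ hg₁ g₂ hg₂ ⟨x, ?_, ?_⟩
      · rw [mem3]
        exact ⟨k, hk, h₁ * j, K.mul_mem (hA_sub g₁ hg₁ hh₁) (hJK hj), by rw [← e₁]; group⟩
      · rw [mem3]
        exact ⟨k', hk', h₂ * j', K.mul_mem (hA_sub g₂ hg₂ hh₂) (hJK hj'), by rw [← e₂]; group⟩
    subst hg
    have e : k * (g₁ * h₁) * j = k' * (g₁ * h₂) * j' := e₁.trans e₂.symm
    set c : G := g₁⁻¹ * (k'⁻¹ * k) * g₁ with hc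
    have key : c * h₁ * j = h₂ * j' := by
      calc c * h₁ * j = g₁⁻¹ * k'⁻¹ * (k * (g₁ * h₁) * j) := by rw [hc]; group
        _ = g₁⁻¹ * k'⁻¹ * (k' * (g₁ * h₂) * j') := by rw [e]
        _ = h₂ * j' := by group
    have hcK : c ∈ (K : Set G) := by
      have : c = h₂ * j' * (j⁻¹ * h₁⁻¹) := by rw [← key]; group
      rw [this]
      exact K.mul_mem (K.mul_mem (hA_sub g₁ hg₁ hh₂) (hJK hj'))
        (K.mul_mem (K.inv_mem (hJK hj)) (K.inv_mem (hA_sub g₁ hg₁ hh₁)))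
    have hcI : c ∈ ((fun x => g₁⁻¹ * x * g₁) '' (K : Set G)) :=
      ⟨k'⁻¹ * k, K.mul_mem (K.inv_mem hk') hk, rfl⟩
    have hne : ((((K : Set G) ∩ ((fun x => g₁⁻¹ * x * g₁) '' (K : Set G))) * {h₁} * (J : Set G)) ∩
        ((((K : Set G) ∩ ((fun x => g₁⁻¹ * x * g₁) '' (K : Set G))) * {h₂} * (J : Set G)))).Nonempty := by
      refine ⟨h₂ * j', ?_, ?_⟩
      · rw [mem3]
        exact ⟨c, ⟨hcK, hcI⟩, j, hj, key⟩
      · rw [mem3]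
        exact ⟨1, ⟨K.one_mem, ⟨1, K.one_mem, by simp⟩⟩, j', hj', by group⟩
    rw [hA_unique g₁ hg₁ h₁ hh₁ h₂ hh₂ hne]
end

section
/- There is no element g ∈ G such that g·T_{1,1}·g^{−1} = T_{ϖ^{−1},ϖ}; that is, the tori T_{1,1} and T_{ϖ^{−1},ϖ} are not conjugate in G = U(1,1)(F). -/
open Matrix
open scoped Pointwise

noncomputable section

/-- The tori `T_{1,1}` and `T_{ϖ⁻¹,ϖ}` are not conjugate in
`G = U(1,1)(F)`: there is no `g ∈ G` with `g·T_{1,1}·g⁻¹ = T_{ϖ⁻¹,ϖ}`. -/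
theorem statement6 {E : Type*} [Field E] (S : Setting E) :
    ¬ ∃ g : Matrix (Fin 2) (Fin 2) E, S.inG g ∧
      (fun x => g * x * g⁻¹) '' S.Tset 1 1 = S.Tset S.ϖ⁻¹ S.ϖ := by

  rintro ⟨g, hg, hT⟩
  -- shorthand
  set w : Matrix (Fin 2) (Fin 2) E := S.wmat with hwdef
  -- characteristic is not 2
  have h2 : (2 : E) ≠ 0 := by
    intro h2
    apply S.ε_nonsquare
    refine ⟨S.sqε, ?_, S.sqε_sq⟩
    rw [S.sqε_conj]
    linear_combination -S.sqε * h2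
  -- w belongs to T_{1,1}
  have hw : w ∈ S.Tset 1 1 := by
    refine ⟨0, 1, ?_, by simp, 0, by simp, by simp⟩
    simp [hwdef, Setting.wmat]
  have hmem : g * w * g⁻¹ ∈ S.Tset S.ϖ⁻¹ S.ϖ := by
    rw [← hT]; exact ⟨w, hw, rfl⟩
  obtain ⟨a, b, hM, hnorm, hsq⟩ := hmem
  -- determinant of g is nonzero
  have hdetw : w.det = -1 := by simp [hwdef, Setting.wmat, Matrix.det_fin_two_of]
  have hdetg : g.det ≠ 0 := by
    intro h0
    have := congrArg Matrix.det hg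
    rw [Matrix.det_mul, Matrix.det_mul, h0, mul_zero] at this
    rw [hdetw] at this
    exact one_ne_zero (neg_eq_zero.mp this.symm)
  have hinv : g⁻¹ * g = 1 := Matrix.nonsing_inv_mul g (Ne.isUnit hdetg)
  have hinv' : g * g⁻¹ = 1 := Matrix.mul_nonsing_inv g (Ne.isUnit hdetg)
  -- trace gives a = 0
  have htr : a = 0 := by
    have h1 : (g * w * g⁻¹).trace = w.trace := by
      rw [Matrix.trace_mul_comm, ← Matrix.mul_assoc, hinv, Matrix.one_mul]
    rw [hM] at h1
    have h2a : a + a = 0 := by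
      simpa [hwdef, Setting.wmat, Matrix.trace_fin_two_of] using h1
    have : (2 : E) * a = 0 := by linear_combination h2a
    rcases mul_eq_zero.mp this with h | h
    · exact absurd h h2
    · exact h
  -- determinant gives b * b = 1
  have hϖ : S.ϖ ≠ 0 := S.ϖ_ne_zero
  have hb2 : b * b = 1 := by
    have h1 : (g * w * g⁻¹).det = w.det := by
      rw [Matrix.det_mul, Matrix.det_mul]
      have : g.det * g⁻¹.det = 1 := by
        rw [← Matrix.det_mul, hinv', Matrix.det_one]
      calc g.det * w.det * g⁻¹.det = w.det * (g.det * g⁻¹.det) := by ring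
        _ = w.det := by rw [this, mul_one]
    rw [hM] at h1
    rw [hdetw] at h1
    have h2d : a * a - b * S.ϖ⁻¹ * (b * S.ϖ) = -1 := by
      simpa [Matrix.det_fin_two_of] using h1
    have hϖϖ : S.ϖ⁻¹ * S.ϖ = 1 := inv_mul_cancel₀ hϖ
    rw [htr] at h2d
    linear_combination -h2d - b * b * hϖϖ
  -- b = 1 or b = -1, and σ b = b
  have hb : b = 1 ∨ b = -1 := by
    rcases mul_self_eq_one_iff.mp hb2 with h | h
    · exact Or.inl h
    · exact Or.inr h
  have hσb : S.σ b = b := by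
    rcases hb with h | h <;> rw [h] <;> simp
  have hbne : b ≠ 0 := by
    rcases hb with h | h <;> rw [h] <;> simp
  -- matrix equation M * g = g * w
  have hMg : !![a, b * S.ϖ⁻¹; b * S.ϖ, a] * g = g * w := by
    rw [← hM, Matrix.mul_assoc, Matrix.mul_assoc, hinv, Matrix.mul_one]
  set p := g 0 0 with hp
  set q := g 0 1 with hq
  set r := g 1 0 with hr
  set s := g 1 1 with hs
  -- entrywise equations from hMg
  have eMg := fun i j => congrFun (congrFun hMg i) j
  have e10 : b * S.ϖ * p + a * r = s := by
    have := eMg 1 0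
    simpa [hwdef, Setting.wmat, Matrix.mul_apply, Fin.sum_univ_two, ← hp, ← hq, ← hr, ← hs]
      using this
  have e11 : b * S.ϖ * q + a * s = r := by
    have := eMg 1 1
    simpa [hwdef, Setting.wmat, Matrix.mul_apply, Fin.sum_univ_two, ← hp, ← hq, ← hr, ← hs]
      using this
  rw [htr, zero_mul, add_zero] at e10 e11
  -- entrywise equations from hg (unitarity)
  have hg' : (S.mbar g)ᵀ * S.wmat * g = S.wmat := hg
  have eG := fun i j => congrFun (congrFun hg' i) j
  have u00 : S.σ r * p + S.σ p * r = 0 := by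
    have := eG 0 0
    simpa [Setting.mbar, Setting.wmat, Matrix.mul_apply, Fin.sum_univ_two, Matrix.transpose_apply,
      ← hp, ← hq, ← hr, ← hs] using this
  have u01 : S.σ r * q + S.σ p * s = 1 := by
    have := eG 0 1
    simpa [Setting.mbar, Setting.wmat, Matrix.mul_apply, Fin.sum_univ_two, Matrix.transpose_apply,
      ← hp, ← hq, ← hr, ← hs] using this
  -- substitute r = bϖq, s = bϖp
  have hσr : S.σ r = b * S.ϖ * S.σ q := by
    rw [← e11, RingHom.map_mul, RingHom.map_mul, hσb, S.ϖ_fixed]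
  have hσs : S.σ s = b * S.ϖ * S.σ p := by
    rw [← e10, RingHom.map_mul, RingHom.map_mul, hσb, S.ϖ_fixed]
  -- the key norm identity: (p+q) σ(p+q) = b⁻¹ ϖ⁻¹... we show  bϖ (p+q)σ(p+q) = 1
  have key : b * S.ϖ * ((p + q) * S.σ (p + q)) = 1 := by
    have h1 : b * S.ϖ * (S.σ q * q + S.σ p * p) = 1 := by
      linear_combination u01 - q * hσr + S.σ p * e10
    have h2 : b * S.ϖ * (S.σ q * p + S.σ p * q) = 0 := by
      linear_combination u00 - p * hσr + S.σ p * e11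
    rw [S.σ.map_add]
    linear_combination h1 + h2
  -- valuation contradiction
  set z := p + q with hz
  have hzσ : z * S.σ z ≠ 0 := by
    intro h0
    rw [h0, mul_zero] at key
    exact one_ne_zero key.symm
  have hzne : z ≠ 0 := fun h => hzσ (by rw [h, zero_mul])
  have hσzne : S.σ z ≠ 0 := fun h => hzσ (by rw [h, mul_zero])
  have hν1 : S.ν 1 = 0 := by
    have := S.ν_mul (one_ne_zero (α := E)) (one_ne_zero (α := E))
    rw [mul_one] at this; omega
  have hνneg1 : S.ν (-1 : E) = 0 := by
    have hne : (-1 : E) ≠ 0 := by simp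
    have := S.ν_mul hne hne
    rw [neg_mul_neg, one_mul] at this; omega
  have hνb : S.ν b = 0 := by
    rcases hb with h | h <;> rw [h] <;> [exact hν1; exact hνneg1]
  -- ν(z σz) from key :  z σz = (bϖ)⁻¹, so ν(bϖ) + ν(zσz) = 0
  have hbϖ : b * S.ϖ ≠ 0 := mul_ne_zero hbne hϖ
  have h3 : S.ν (b * S.ϖ) + S.ν (z * S.σ z) = 0 := by
    have := S.ν_mul hbϖ hzσ
    rw [key] at this; omega
  have h4 : S.ν (b * S.ϖ) = 1 := by
    rw [S.ν_mul hbne hϖ, hνb, S.ν_ϖ]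
    omega

  have h5 : S.ν (z * S.σ z) = 2 * S.ν z := by
    rw [S.ν_mul hzne hσzne, S.ν_σ]; ring
  omega
end
end
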